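/- arXiv:1901.02424 — 3 statements merged into one kernel-verified Lean document; each statement's English description precedes it below -/
import Mathlib

section
/- Let P be a complex polynomial and suppose that the function z ↦ |e^{P(z)}| tends to 1 as Re(z) → +∞, uniformly in Im(z). Then P is constant with purely imaginary value, i.e., e^{P} is a constant of modulus 1. -/
/-!
Since `log ‖exp w‖ = Re w`, the hypothesis says that `Re P(z) → 0` as `Re z → +∞`. On each
horizontal line `t ↦ P(t + z)` is a polynomial in the real variable `t`, and so is
`P(t + z) + conj P(t + z) = 2 Re P(t + z)`; a polynomial tending to `0` at infinity vanishes,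
hence `Re P ≡ 0`. A nonconstant complex polynomial is surjective, so `P` is constant.
-/

open Filter Complex Polynomial Topology

theorem Polynomial.eq_zero_of_tendsto_eval_zero {α R : Type*} [NormedRing R]
    [IsAbsoluteValue (norm : R → ℝ)] {l : Filter α} [l.NeBot] {z : α → R} (p : R[X])
    (hz : Tendsto (fun x => ‖z x‖) l atTop) (hp : Tendsto (fun x => p.eval (z x)) l (𝓝 0)) :
    p = 0 := by
  by_cases hd : 0 < degree p
  · exact absurd (p.tendsto_norm_atTop hd hz) (not_tendsto_atTop_of_tendsto_nhds hp.norm)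
  · rw [eq_C_of_degree_le_zero (not_lt.mp hd)] at hp ⊢
    simpa using tendsto_const_nhds_iff.mp (by simpa only [eval_C] using hp)

theorem Polynomial.re_eval_ofReal_eq_zero_of_tendsto (p : ℂ[X])
    (hp : Tendsto (fun t : ℝ => (p.eval (t : ℂ)).re) atTop (𝓝 0)) (x : ℝ) :
    (p.eval (x : ℂ)).re = 0 := by
  have h_eval (t : ℝ) :
      (p + p.map (starRingEnd ℂ)).eval (t : ℂ) = 2 * ((p.eval (t : ℂ)).re : ℂ) := by
    rw [eval_add, ← conj_ofReal, eval_map_apply, conj_ofReal, add_conj, ofReal_mul, ofReal_ofNat]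
  have h_zero : p + p.map (starRingEnd ℂ) = 0 := by
    refine eq_zero_of_tendsto_eval_zero _ (l := atTop) (z := ((↑) : ℝ → ℂ)) ?_ ?_
    · simpa only [norm_real, Real.norm_eq_abs] using tendsto_abs_atTop_atTop
    · simpa only [h_eval, ofReal_zero, mul_zero, Function.comp_def] using
        ((continuous_ofReal.tendsto 0).comp hp).const_mul (2 : ℂ)
  simpa [h_eval] using congrArg (eval (x : ℂ)) h_zero

theorem Polynomial.re_eval_eq_zero_of_tendsto (P : ℂ[X])
    (hP : Tendsto (fun z => (P.eval z).re) (comap re atTop) (𝓝 0)) (z : ℂ) :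
    (P.eval z).re = 0 := by
  have h_line : Tendsto (fun t : ℝ => (t : ℂ) + z) atTop (comap re atTop) := by
    simpa [tendsto_comap_iff, Function.comp_def] using
      tendsto_atTop_add_const_right _ z.re tendsto_id
  have := (P.comp (X + C z)).re_eval_ofReal_eq_zero_of_tendsto
    (by simpa [Function.comp_def] using hP.comp h_line) 0
  rwa [ofReal_zero, eval_comp, eval_add, eval_X, eval_C, zero_add] at this

theorem Complex.tendsto_re_of_tendsto_norm_exp {α : Type*} {l : Filter α} {f : α → ℂ}
    (h : Tendsto (fun x => ‖exp (f x)‖) l (𝓝 1)) :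
    Tendsto (fun x => (f x).re) l (𝓝 0) := by
  simpa [norm_exp, Function.comp_def] using
    ((Real.continuousAt_log one_ne_zero).tendsto.comp h)

/-- If `|e^{P(z)}| → 1` as `Re z → +∞` uniformly in `Im z`, then the polynomial
`P` is constant with purely imaginary value. -/
theorem stmt_1 (P : Polynomial ℂ)
    (h : ∀ ε > (0 : ℝ), ∃ X : ℝ, ∀ z : ℂ, X ≤ z.re →
        |‖Complex.exp (P.eval z)‖ - 1| < ε) :
    P.natDegree = 0 ∧ (P.coeff 0).re = 0 := by
  have h_lim : Tendsto (fun z => ‖exp (P.eval z)‖) (comap re atTop) (𝓝 1) := by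
    refine ((atTop_basis.comap re).tendsto_iff Metric.nhds_basis_ball).mpr fun ε hε => ?_
    obtain ⟨X, hX⟩ := h ε hε
    exact ⟨X, trivial, fun z hz => hX z hz⟩
  have h_re := P.re_eval_eq_zero_of_tendsto (tendsto_re_of_tendsto_norm_exp h_lim)
  refine ⟨?_, by simpa [coeff_zero_eq_eval_zero] using h_re 0⟩
  by_contra h_deg
  obtain ⟨z, hz⟩ := IsAlgClosed.eval_surjective h_deg 1
  simpa [hz] using h_re z
end

section
/- Let (a_k)_{k≥1} be a sequence of nonzero complex numbers with |a_k| ≤ |a_{k+1}|, and let n(r) denote the number of k with |a_k| < r. Fix integers p ≥ 1 and q ≥ 1. If n(r) = o(r^p (log r)^{q−1}) as r → +∞, then the series ∑_{k=1}^{∞} 1/|a_k|^{p+1} converges. -/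
/-!
If `n(r) = o(r^p (log r)^(q-1))` then `n(r) = O(r^e)` with `e = p + 1/2`. The first `k + 1`
terms all have modulus `≤ |a_k| < 2|a_k|`, so `k + 1 ≤ n(2|a_k|) = O(|a_k|^e)`; hence
`|a_k|^(-(p+1)) = O(k^(-(p+1)/e))`, a convergent `p`-series since `(p+1)/e > 1`.
-/

open Filter Real Asymptotics

noncomputable def countingFunction (c : ℕ → ℝ) (r : ℝ) : ℝ := ({k | c k < r}.ncard : ℝ)

theorem isBigO_rpow_of_isLittleO_pow_mul_log_pow {f : ℝ → ℝ} {p m : ℕ} {ε : ℝ}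
    (hε : 0 < ε) (hf : f =o[atTop] fun r => r ^ p * log r ^ m) :
    f =O[atTop] fun r => r ^ (p + ε) := by
  have hlog : (fun r => log r ^ m) =o[atTop] fun r => r ^ ε := by
    simpa using isLittleO_log_rpow_rpow_atTop m hε
  have hpow : (fun r => r ^ p * log r ^ m) =o[atTop] fun r => r ^ (p + ε) := by
    refine ((isBigO_refl _ atTop).mul_isLittleO hlog).congr' EventuallyEq.rfl ?_
    filter_upwards [eventually_gt_atTop 0] with r hr
    rw [rpow_add hr, rpow_natCast]
  exact (hf.trans hpow).isBigO

section Counting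

variable {c : ℕ → ℝ}

theorem tendsto_atTop_of_finite_setOf_lt (hfin : ∀ r, {k | c k < r}.Finite) :
    Tendsto c atTop atTop := by
  rw [← Nat.cofinite_eq_atTop]
  refine tendsto_atTop.2 fun r => ?_
  filter_upwards [(hfin r).eventually_cofinite_notMem] with k hk
  simpa using hk

theorem succ_le_countingFunction (hc : Monotone c) (hfin : ∀ r, {k | c k < r}.Finite)
    {k : ℕ} {r : ℝ} (hr : c k < r) : (k + 1 : ℝ) ≤ countingFunction c r := by
  have hsub : (Finset.range (k + 1) : Set ℕ) ⊆ {j | c j < r} := fun j hj =>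
    (hc (Nat.lt_succ_iff.1 (Finset.mem_range.1 hj))).trans_lt hr
  have hcard := Set.ncard_le_ncard hsub (hfin r)
  rw [Set.ncard_coe_finset, Finset.card_range] at hcard
  unfold countingFunction
  exact_mod_cast hcard

theorem natCast_isBigO_rpow_of_countingFunction_isBigO (hc : Monotone c)
    (hfin : ∀ r, {k | c k < r}.Finite) {e : ℝ}
    (hO : countingFunction c =O[atTop] fun r => r ^ e) :
    (fun k : ℕ => (k : ℝ)) =O[atTop] fun k => c k ^ e := by
  have htend := tendsto_atTop_of_finite_setOf_lt hfin
  have hpos : ∀ᶠ k in atTop, 0 < c k := htend.eventually_gt_atTop 0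
  have hk : (fun k : ℕ => (k : ℝ)) =O[atTop] fun k => countingFunction c (2 * c k) := by
    refine IsBigO.of_bound 1 ?_
    filter_upwards [hpos] with k hk
    have hcount := succ_le_countingFunction hc hfin (by linarith : c k < 2 * c k)
    rw [one_mul, norm_of_nonneg (Nat.cast_nonneg k), norm_of_nonneg (by linarith)]
    linarith
  have h2c : Tendsto (fun k => 2 * c k) atTop atTop := htend.const_mul_atTop two_pos
  refine hk.trans ((hO.comp_tendsto h2c).trans ?_)
  refine (isBigO_const_mul_self ((2 : ℝ) ^ e) (fun k => c k ^ e) atTop).congr' ?_ .rfl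
  filter_upwards [hpos] with k hk
  simp only [Function.comp_apply, mul_rpow zero_le_two hk.le]

theorem summable_rpow_inv_of_countingFunction_isBigO (hc : Monotone c)
    (hfin : ∀ r, {k | c k < r}.Finite) {e s : ℝ} (he : 0 < e) (hes : e < s)
    (hO : countingFunction c =O[atTop] fun r => r ^ e) :
    Summable fun k => (c k ^ s)⁻¹ := by
  have hpos : ∀ᶠ k in atTop, 0 < c k :=
    (tendsto_atTop_of_finite_setOf_lt hfin).eventually_gt_atTop 0
  have hk : (fun k : ℕ => (k : ℝ) ^ (s / e)) =O[atTop] fun k => c k ^ s := by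
    refine ((natCast_isBigO_rpow_of_countingFunction_isBigO hc hfin hO).rpow
      (div_pos (he.trans hes) he).le ?_).congr' .rfl ?_
    · filter_upwards [hpos] with k hk using (rpow_pos_of_pos hk e).le
    · filter_upwards [hpos] with k hk
      rw [← rpow_mul hk.le, mul_div_cancel₀ s he.ne']
  refine summable_of_isBigO_nat (summable_nat_rpow_inv.2 ((one_lt_div he).2 hes)) ?_
  refine hk.inv_rev ?_
  filter_upwards [eventually_ge_atTop 1] with k hk h0
  exact absurd h0 (rpow_pos_of_pos (by exact_mod_cast hk) _).ne'

end Counting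

theorem stmt_4_general (a : ℕ → ℂ) (hmono : ∀ k, ‖a k‖ ≤ ‖a (k + 1)‖)
    (p q : ℕ)
    (n : ℝ → ℝ) (hfin : ∀ r : ℝ, {k : ℕ | ‖a k‖ < r}.Finite)
    (hn : ∀ r : ℝ, n r = ({k : ℕ | ‖a k‖ < r}.ncard : ℝ))
    (ho : n =o[atTop] fun r : ℝ => r ^ p * (Real.log r) ^ (q - 1)) :
    Summable (fun k => 1 / ‖a k‖ ^ (p + 1)) := by
  obtain rfl : n = countingFunction fun k => ‖a k‖ := funext hn
  have hO := isBigO_rpow_of_isLittleO_pow_mul_log_pow one_half_pos ho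
  have hexp : (p : ℝ) + 1 / 2 < (p + 1 : ℕ) := by push_cast; linarith
  have hsum := summable_rpow_inv_of_countingFunction_isBigO (monotone_nat_of_le_succ hmono)
    hfin (by positivity) hexp hO
  simpa only [rpow_natCast, one_div] using hsum

/-- If the counting function `n(r) = #{k : |a_k| < r}` of a sequence of nonzero
complex numbers with nondecreasing moduli satisfies `n(r) = o(r^p (log r)^{q-1})`, then
`∑ 1/|a_k|^{p+1}` converges. -/
theorem stmt_4 (a : ℕ → ℂ) (ha : ∀ k, a k ≠ 0) (hmono : ∀ k, ‖a k‖ ≤ ‖a (k + 1)‖)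
    (p q : ℕ) (hp : 1 ≤ p) (hq : 1 ≤ q)
    (n : ℝ → ℝ) (hfin : ∀ r : ℝ, {k : ℕ | ‖a k‖ < r}.Finite)
    (hn : ∀ r : ℝ, n r = ({k : ℕ | ‖a k‖ < r}.ncard : ℝ))
    (ho : n =o[atTop] fun r : ℝ => r ^ p * (Real.log r) ^ (q - 1)) :
    Summable (fun k => 1 / ‖a k‖ ^ (p + 1)) :=
  stmt_4_general a hmono p q n hfin hn ho
end

section
/- Let f be an entire function of finite order ρ(f) ≤ 1 with only finitely many zeros. Then f(z) = R(z) e^{az+b} for some polynomial R and complex constants a, b; more precisely, f = R·e^g where R is the polynomial whose roots are the zeros of f and g is a polynomial of degree at most 1. -/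
/-!
Dividing `f` by the monic polynomial `P` with the same zeros, counted with multiplicity, leaves a
zero-free entire function `F = exp ∘ g`. Since `‖P z‖ ≥ 1` near infinity, `F` inherits the bound
`Re g z ≤ A + ‖z‖ ^ s` with `s = 3/2 < 2`. Borel–Carathéodory turns this one-sided bound into
`‖g z‖ = O(‖z‖ ^ s)`, and Cauchy's estimates on large circles then kill every Taylor coefficient
of `g` of degree at least `2`, so `g` is affine.
-/

open Complex

theorem Differentiable.dslope {E : Type*} [NormedAddCommGroup E] [NormedSpace ℂ E]
    [CompleteSpace E] {f : ℂ → E} (hf : Differentiable ℂ f) (a : ℂ) :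
    Differentiable ℂ (dslope f a) :=
  differentiableOn_univ.mp ((differentiableOn_dslope Filter.univ_mem).mpr hf.differentiableOn)

theorem Differentiable.exists_eq_sub_pow_smul {E : Type*} [NormedAddCommGroup E]
    [NormedSpace ℂ E] [CompleteSpace E] {f : ℂ → E} (hf : Differentiable ℂ f) {z₀ : ℂ}
    (hf₀ : ¬∀ᶠ z in nhds z₀, f z = 0) :
    ∃ (m : ℕ) (F : ℂ → E), Differentiable ℂ F ∧ F z₀ ≠ 0 ∧ ∀ z, f z = (z - z₀) ^ m • F z := by
  obtain ⟨p, hp⟩ := hf.analyticAt z₀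
  have hdslope : ∀ k, Differentiable ℂ ((Function.swap _root_.dslope z₀)^[k] f) := by
    intro k
    induction k with
    | zero => exact hf
    | succ k ih => rw [Function.iterate_succ_apply']; exact ih.dslope z₀
  exact ⟨p.order, _, hdslope p.order,
    hp.iterate_dslope_fslope_ne_zero (mt hp.locally_zero_iff.mpr hf₀),
    hp.eq_pow_order_mul_iterate_dslope⟩

theorem Differentiable.exists_monic_mul_of_finite_zeros {f : ℂ → ℂ} (hf : Differentiable ℂ f)
    (hzeros : {z | f z = 0}.Finite) :
    ∃ P : Polynomial ℂ, P.Monic ∧ ∃ F : ℂ → ℂ, Differentiable ℂ F ∧ (∀ z, F z ≠ 0) ∧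
      ∀ z, f z = P.eval z * F z := by
  obtain ⟨s, hs⟩ := hzeros.exists_finset_coe
  induction s using Finset.induction_on generalizing f with
  | empty =>
    refine ⟨1, Polynomial.monic_one, f, hf, fun z hz => ?_, by simp⟩
    simpa using hs.symm.subset (Set.mem_ofPred.mpr hz)
  | insert a s ha ih =>
    obtain ⟨m, F, hF, hFa, hfF⟩ :=
      hf.exists_eq_sub_pow_smul fun h => infinite_of_mem_nhds a h hzeros
    have hFzeros : (s : Set ℂ) = {z | F z = 0} := by
      ext z
      rcases eq_or_ne z a with rfl | hza
      · simp [hFa, ha]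
      · have hz := congrArg (z ∈ ·) hs
        simpa [hfF z, hza, sub_eq_zero] using hz
    obtain ⟨P, hP, G, hG, hG0, hFG⟩ := ih hF (hFzeros ▸ s.finite_toSet) hFzeros
    refine ⟨(Polynomial.X - Polynomial.C a) ^ m * P, ((Polynomial.monic_X_sub_C a).pow m).mul hP,
      G, hG, hG0, fun z => ?_⟩
    simp only [hfF z, hFG z, smul_eq_mul, Polynomial.eval_mul, Polynomial.eval_pow,
      Polynomial.eval_sub, Polynomial.eval_X, Polynomial.eval_C]
    ring

theorem Polynomial.Monic.eventually_one_le_norm_eval {𝕜 : Type*} [NontriviallyNormedField 𝕜]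
    [ProperSpace 𝕜] {P : Polynomial 𝕜} (hP : P.Monic) :
    ∀ᶠ z in Filter.cocompact 𝕜, 1 ≤ ‖P.eval z‖ := by
  rcases Nat.eq_zero_or_pos P.natDegree with h | h
  · simp [hP.natDegree_eq_zero.mp h]
  · exact (P.tendsto_norm_atTop (Polynomial.natDegree_pos_iff_degree_pos.mp h)
      tendsto_norm_cocompact_atTop).eventually_ge_atTop 1

theorem exists_norm_le_mul_exp_of_monic_mul {𝕜 : Type*} [NontriviallyNormedField 𝕜]
    [ProperSpace 𝕜] {P : Polynomial 𝕜} (hP : P.Monic) {F : 𝕜 → 𝕜} (hF : Continuous F)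
    {C s : ℝ} (hPF : ∀ z, ‖P.eval z * F z‖ ≤ C * Real.exp (‖z‖ ^ s)) :
    ∃ C', ∀ z, ‖F z‖ ≤ C' * Real.exp (‖z‖ ^ s) := by
  obtain ⟨K, hK, hPK⟩ := Filter.mem_cocompact.mp hP.eventually_one_le_norm_eval
  obtain ⟨M, hM⟩ := hK.exists_bound_of_continuousOn hF.continuousOn
  refine ⟨max M C, fun z => ?_⟩
  by_cases hz : z ∈ K
  · have hFM : ‖F z‖ ≤ max M C := (hM z hz).trans (le_max_left M C)
    exact hFM.trans (le_mul_of_one_le_right ((norm_nonneg _).trans hFM)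
      (Real.one_le_exp (by positivity)))
  · calc ‖F z‖ ≤ ‖P.eval z‖ * ‖F z‖ := le_mul_of_one_le_left (norm_nonneg _) (hPK hz)
      _ ≤ C * Real.exp (‖z‖ ^ s) := by simpa only [norm_mul] using hPF z
      _ ≤ max M C * Real.exp (‖z‖ ^ s) := by gcongr; exact le_max_right M C

theorem Differentiable.exists_eq_exp_comp {f : ℂ → ℂ} (hf : Differentiable ℂ f)
    (hf0 : ∀ z, f z ≠ 0) : ∃ g : ℂ → ℂ, Differentiable ℂ g ∧ ∀ z, f z = Complex.exp (g z) := by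
  obtain ⟨g, hg0, hg⟩ :=
    ((hf.deriv.div hf hf0).isExactOn_univ).with_val_at 0 (Complex.log (f 0))
  have hg' : ∀ z, HasDerivAt g (_root_.deriv f z / f z) z := fun z => hg z (Set.mem_univ z)
  have hderiv : ∀ z, HasDerivAt (fun w => f w * Complex.exp (-g w)) 0 z := by
    intro z
    refine ((hf z).hasDerivAt.mul (hg' z).neg.cexp).congr_deriv ?_
    field_simp [hf0 z]
    ring
  have hconst := is_const_of_deriv_eq_zero (fun z => (hderiv z).differentiableAt)
    (fun z => (hderiv z).deriv)
  refine ⟨g, fun z => (hg' z).differentiableAt, fun z => ?_⟩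
  have h := hconst z 0
  simp only [hg0, exp_neg, exp_log (hf0 0), mul_inv_cancel₀ (hf0 0)] at h
  rwa [mul_inv_eq_one₀ (exp_ne_zero _)] at h

theorem exists_norm_le_mul_rpow_of_re_le {g : ℂ → ℂ} (hg : Differentiable ℂ g) {A s : ℝ}
    (hs : 0 ≤ s)
    (hre : ∀ z, (g z).re ≤ A + ‖z‖ ^ s) :
    ∃ C, ∀ z, 1 ≤ ‖z‖ → ‖g z‖ ≤ C * ‖z‖ ^ s := by
  refine ⟨2 * (|A| + 1 + 2 ^ s) + 3 * ‖g 0‖, fun z hz => ?_⟩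
  set r := ‖z‖
  have hr : 0 < r := one_pos.trans_le hz
  have hrs : 1 ≤ r ^ s := Real.one_le_rpow hz hs
  set M := (|A| + 1 + 2 ^ s) * r ^ s
  have hM : 0 < M := by positivity
  have hreM : Set.MapsTo g (Metric.ball 0 (2 * r)) {w | w.re ≤ M} := by
    intro w hw
    have hw' : ‖w‖ ^ s ≤ 2 ^ s * r ^ s := by
      rw [← Real.mul_rpow zero_le_two hr.le]
      exact Real.rpow_le_rpow (norm_nonneg w) (mem_ball_zero_iff.mp hw).le hs
    have := hre w
    simp only [Set.mem_ofPred_eq, M]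
    nlinarith [le_abs_self A, mul_le_mul_of_nonneg_left hrs (by positivity : (0 : ℝ) ≤ |A| + 1)]
  have hBC := borelCaratheodory hM hg.differentiableOn hreM (by positivity)
    (mem_ball_zero_iff.mpr (by linarith : r < 2 * r))
  have hR : 2 * M * r / (2 * r - r) + ‖g 0‖ * (2 * r + r) / (2 * r - r) = 2 * M + 3 * ‖g 0‖ := by
    field_simp
    ring
  rw [hR] at hBC
  nlinarith [norm_nonneg (g 0)]

theorem iteratedDeriv_eq_zero_of_norm_le_rpow {E : Type*} [NormedAddCommGroup E]
    [NormedSpace ℂ E] [CompleteSpace E] {g : ℂ → E} (hg : Differentiable ℂ g) {C s : ℝ}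
    (hbound : ∀ z, 1 ≤ ‖z‖ → ‖g z‖ ≤ C * ‖z‖ ^ s) {n : ℕ} (hn : s < n) :
    iteratedDeriv n g 0 = 0 := by
  have hcauchy : ∀ r : ℝ, 1 ≤ r → ‖iteratedDeriv n g 0‖ ≤ n.factorial * C * r ^ (s - n) := by
    intro r hr
    have hr0 : 0 < r := one_pos.trans_le hr
    have h := norm_iteratedDeriv_le_of_forall_mem_sphere_norm_le n hr0 hg.diffContOnCl
      (fun z hz => (hbound z (by rwa [mem_sphere_zero_iff_norm.mp hz])).trans_eq
        (by rw [mem_sphere_zero_iff_norm.mp hz]))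
    rw [Real.rpow_sub hr0, Real.rpow_natCast]
    exact h.trans_eq (by ring)
  have hlim : Filter.Tendsto (fun r : ℝ => n.factorial * C * r ^ (s - n)) Filter.atTop
      (nhds 0) := by
    simpa [neg_sub] using (tendsto_rpow_neg_atTop (sub_pos.mpr hn)).const_mul (n.factorial * C)
  exact norm_le_zero_iff.mp (ge_of_tendsto hlim ((Filter.eventually_ge_atTop 1).mono hcauchy))

theorem exists_eq_mul_add_of_norm_le_rpow {g : ℂ → ℂ} (hg : Differentiable ℂ g) {C s : ℝ}
    (hs : s < 2) (hbound : ∀ z, 1 ≤ ‖z‖ → ‖g z‖ ≤ C * ‖z‖ ^ s) :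
    ∃ a b : ℂ, ∀ z, g z = a * z + b := by
  refine ⟨deriv g 0, g 0, fun z => ?_⟩
  have hhigh : ∀ n ∉ Finset.range 2,
      ((n.factorial : ℂ)⁻¹ • (z - 0) ^ n • iteratedDeriv n g 0) = 0 := by
    intro n hn
    have h2n : (2 : ℝ) ≤ n := by exact_mod_cast not_lt.mp (Finset.mem_range.not.mp hn)
    rw [iteratedDeriv_eq_zero_of_norm_le_rpow hg hbound (hs.trans_le h2n), smul_zero, smul_zero]
  rw [(hasSum_taylorSeries_of_entire hg 0 z).unique (hasSum_sum_of_ne_finset_zero hhigh)]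
  simp [Finset.sum_range_succ, add_comm, mul_comm]

theorem Differentiable.exists_eq_exp_mul_add {f : ℂ → ℂ} (hf : Differentiable ℂ f)
    (hf0 : ∀ z, f z ≠ 0) {C s : ℝ} (hs₀ : 0 ≤ s) (hs : s < 2)
    (hbound : ∀ z, ‖f z‖ ≤ C * Real.exp (‖z‖ ^ s)) :
    ∃ a b : ℂ, ∀ z, f z = Complex.exp (a * z + b) := by
  obtain ⟨g, hg, hfg⟩ := hf.exists_eq_exp_comp hf0
  have hC : 0 < C := pos_of_mul_pos_left ((norm_pos_iff.mpr (hf0 0)).trans_le (hbound 0))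
    (Real.exp_pos _).le
  have hre : ∀ z, (g z).re ≤ Real.log C + ‖z‖ ^ s := by
    intro z
    rw [← Real.exp_le_exp, Real.exp_add, Real.exp_log hC, ← Complex.norm_exp, ← hfg]
    exact hbound z
  obtain ⟨K, hK⟩ := exists_norm_le_mul_rpow_of_re_le hg hs₀ hre
  obtain ⟨a, b, hab⟩ := exists_eq_mul_add_of_norm_le_rpow hg hs hK
  exact ⟨a, b, fun z => by rw [hfg, hab]⟩

/-- an entire function of order at most `1` with finitely many zeros has the
form `f(z) = R(z) e^{az+b}` with `R` a polynomial whose roots are exactly the zeros of `f`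
(Hadamard factorization, special case). The order condition `ρ(f) ≤ 1` is expressed by the
growth bound `‖f z‖ ≤ C exp(‖z‖^{1+ε})` for every `ε > 0`. -/
theorem stmt_13 (f : ℂ → ℂ) (hf : Differentiable ℂ f)
    (horder : ∀ ε > (0 : ℝ), ∃ C > (0 : ℝ), ∀ z : ℂ,
      ‖f z‖ ≤ C * Real.exp (‖z‖ ^ ((1 : ℝ) + ε)))
    (hzeros : {z : ℂ | f z = 0}.Finite) :
    ∃ (R : Polynomial ℂ) (a b : ℂ),
      (∀ z : ℂ, f z = R.eval z * Complex.exp (a * z + b)) ∧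
      (∀ z : ℂ, R.IsRoot z ↔ f z = 0) := by
  obtain ⟨C, -, hC⟩ := horder (1 / 2) (by norm_num)
  obtain ⟨P, hP, F, hF, hF0, hfPF⟩ := hf.exists_monic_mul_of_finite_zeros hzeros
  obtain ⟨C', hC'⟩ := exists_norm_le_mul_exp_of_monic_mul hP hF.continuous
    (fun z => hfPF z ▸ hC z)
  obtain ⟨a, b, hab⟩ := hF.exists_eq_exp_mul_add hF0 (by norm_num) (by norm_num) hC'
  refine ⟨P, a, b, fun z => by rw [hfPF, hab], fun z => ?_⟩
  rw [Polynomial.IsRoot, hfPF, mul_eq_zero, or_iff_left (hF0 z)]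
end
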